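/- arXiv:1303.4834 — 2 statements merged into one kernel-verified Lean document; each statement's English description precedes it below -/
import Mathlib

section
/- Let c ∈ ℝ with c < 0 and let τ > 2/√(−c). Let S(τ) be the 2×2 real matrix with rows (1 + τ²c/2, τc(1 + τ²c/4)) and (τ, 1 + τ²c/2). Then trace S(τ) < −2 and there exists x ∈ ℝ² such that the set {S(τ)ⁿ·x : n ∈ ℕ} is unbounded, even though for the matrix A with rows (0, c) and (1, 0) every positive semi-orbit {exp(tA)·x : t ≥ 0} is bounded. -/
open Matrix Bornology

/-- The positive semi-orbit of `x` under the continuous dynamical system `y' = A y`,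
i.e. the set `{exp (t A) x : t ≥ 0}`. -/
noncomputable def contOrbit (A : Matrix (Fin 2) (Fin 2) ℝ) (x : EuclideanSpace ℝ (Fin 2)) :
    Set (EuclideanSpace ℝ (Fin 2)) :=
  {y | ∃ t : ℝ, 0 ≤ t ∧ y = (NormedSpace.exp (t • A)).mulVec x}

/-- The positive semi-orbit of `x` under the discrete dynamical system `y_{n+1} = S y_n`,
i.e. the set `{Sⁿ x : n ∈ ℕ}`. -/
def discOrbit (S : Matrix (Fin 2) (Fin 2) ℝ) (x : EuclideanSpace ℝ (Fin 2)) :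
    Set (EuclideanSpace ℝ (Fin 2)) :=
  {y | ∃ n : ℕ, y = (S ^ n).mulVec x}

/-!
The Störmer–Verlet matrix is symplectic (`det S = 1`), so its eigenvalues `λ, 1/λ` satisfy
`λ + 1/λ = tr S = 2 + τ²c`. For `τ²c < -4` they are real with `λ < -1`, and the iterates of
an eigenvector grow geometrically. The exact flow, on the other hand, is a rotation in
disguise: with `ω = √(-c)`, the map `x + iy ↦ !![x, -ω y; y/ω, x]` is an `ℝ`-algebra embedding
of `ℂ` sending `i t ω` to `t A`, so `exp (t A)` is the image of a point of the unit circle,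
and every orbit lies in the image of a compact set.
-/

theorem Matrix.pow_mulVec_of_mulVec_eq_smul {n R : Type*} [Fintype n] [DecidableEq n]
    [CommSemiring R] {S : Matrix n n R} {v : n → R} {μ : R} (h : S *ᵥ v = μ • v) (k : ℕ) :
    (S ^ k) *ᵥ v = μ ^ k • v := by
  induction k with
  | zero => simp
  | succ k ih => rw [pow_succ, ← mulVec_mulVec, h, mulVec_smul, ih, smul_smul, pow_succ']

theorem not_isBounded_discOrbit_of_mulVec_eq_smul {S : Matrix (Fin 2) (Fin 2) ℝ}
    {v : EuclideanSpace ℝ (Fin 2)} {μ : ℝ} (hv : v ≠ 0) (hμ : 1 < |μ|)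
    (h : S *ᵥ v.ofLp = μ • v.ofLp) : ¬ IsBounded (discOrbit S v) := by
  rw [isBounded_iff_forall_norm_le]
  rintro ⟨C, hC⟩
  obtain ⟨k, hk⟩ := pow_unbounded_of_one_lt (C / ‖v‖) hμ
  have hle := hC (μ ^ k • v) ⟨k, (S.pow_mulVec_of_mulVec_eq_smul h k).symm⟩
  rw [norm_smul, norm_pow, Real.norm_eq_abs] at hle
  rw [div_lt_iff₀ (norm_pos_iff.mpr hv)] at hk
  linarith

theorem Matrix.mulVec_eq_smul_of_det_eq_one {a b d : ℝ} (hdet : (!![a, b; d, a]).det = 1)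
    (ha : 1 ≤ a ^ 2) :
    !![a, b; d, a] *ᵥ ![-√(a ^ 2 - 1), d] = (a - √(a ^ 2 - 1)) • ![-√(a ^ 2 - 1), d] := by
  rw [det_fin_two_of] at hdet
  have hs := Real.sq_sqrt (sub_nonneg.mpr ha)
  ext i
  fin_cases i <;> simp [vecHead, vecTail] <;> nlinarith

theorem one_lt_abs_sub_sqrt_sq_sub_one {a : ℝ} (ha : a < -1) : 1 < |a - √(a ^ 2 - 1)| := by
  rw [abs_of_neg (by linarith [Real.sqrt_nonneg (a ^ 2 - 1)])]
  linarith [Real.sqrt_nonneg (a ^ 2 - 1)]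

noncomputable def stormerVerlet (c τ : ℝ) : Matrix (Fin 2) (Fin 2) ℝ :=
  !![1 + τ ^ 2 * c / 2, τ * c * (1 + τ ^ 2 * c / 4); τ, 1 + τ ^ 2 * c / 2]

theorem stormerVerlet_trace (c τ : ℝ) : (stormerVerlet c τ).trace = 2 + τ ^ 2 * c := by
  rw [stormerVerlet, trace_fin_two_of]
  ring

theorem stormerVerlet_det (c τ : ℝ) : (stormerVerlet c τ).det = 1 := by
  rw [stormerVerlet, det_fin_two_of]
  ring

theorem not_isBounded_discOrbit_stormerVerlet {c τ : ℝ} (hτ : 0 < τ) (h : τ ^ 2 * c < -4) :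
    ∃ x, ¬ IsBounded (discOrbit (stormerVerlet c τ) x) := by
  have ha : 1 + τ ^ 2 * c / 2 < -1 := by linarith
  have hv : !₂[-√((1 + τ ^ 2 * c / 2) ^ 2 - 1), τ] ≠ 0 := fun h0 =>
    hτ.ne' (by simpa using congrArg (· 1) h0)
  exact ⟨_, not_isBounded_discOrbit_of_mulVec_eq_smul hv (one_lt_abs_sub_sqrt_sq_sub_one ha)
    (mulVec_eq_smul_of_det_eq_one (stormerVerlet_det c τ) (by nlinarith))⟩

noncomputable def complexToMatrix (ω : ℝ) (hω : ω ≠ 0) : ℂ →ₐ[ℝ] Matrix (Fin 2) (Fin 2) ℝ where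
  toFun z := !![z.re, -ω * z.im; z.im / ω, z.re]
  map_one' := by ext i j; fin_cases i <;> fin_cases j <;> simp
  map_mul' z w := by
    ext i j
    fin_cases i <;> fin_cases j <;> simp <;> field_simp <;> ring
  map_zero' := by ext i j; fin_cases i <;> fin_cases j <;> simp
  map_add' z w := by ext i j; fin_cases i <;> fin_cases j <;> simp <;> ring
  commutes' r := by ext i j; fin_cases i <;> fin_cases j <;> simp [algebraMap_eq_diagonal]

theorem complexToMatrix_apply (ω : ℝ) (hω : ω ≠ 0) (z : ℂ) :
    complexToMatrix ω hω z = !![z.re, -ω * z.im; z.im / ω, z.re] := rfl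

theorem complexToMatrix_ofReal_mul_I (ω : ℝ) (hω : ω ≠ 0) (t : ℝ) :
    complexToMatrix ω hω (t * ω * Complex.I) = t • !![0, -ω ^ 2; 1, 0] := by
  rw [complexToMatrix_apply]
  ext i j
  fin_cases i <;> fin_cases j <;> simp [hω]; ring

theorem continuous_complexToMatrix (ω : ℝ) (hω : ω ≠ 0) : Continuous (complexToMatrix ω hω) :=
  (complexToMatrix ω hω).toLinearMap.continuous_of_finiteDimensional

section

-- `map_exp` needs a normed ring; the `L∞` operator norm induces the product topology,
-- so it does not change `NormedSpace.exp`.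
attribute [local instance] Matrix.linftyOpNormedAddCommGroup Matrix.linftyOpNormedRing
  Matrix.linftyOpNormedAlgebra

theorem exp_smul_eq_complexToMatrix (ω : ℝ) (hω : ω ≠ 0) (t : ℝ) :
    NormedSpace.exp (t • !![0, -ω ^ 2; 1, 0]) =
      complexToMatrix ω hω (Complex.exp (t * ω * Complex.I)) := by
  rw [← complexToMatrix_ofReal_mul_I ω hω, Complex.exp_eq_exp_ℂ]
  exact (NormedSpace.map_exp _ (continuous_complexToMatrix ω hω) _).symm

end

theorem isBounded_contOrbit (ω : ℝ) (hω : ω ≠ 0) (x : EuclideanSpace ℝ (Fin 2)) :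
    IsBounded (contOrbit !![0, -ω ^ 2; 1, 0] x) := by
  let f (z : ℂ) : EuclideanSpace ℝ (Fin 2) := WithLp.toLp 2 (complexToMatrix ω hω z *ᵥ x.ofLp)
  have hf : Continuous f := by
    have := continuous_complexToMatrix ω hω
    fun_prop
  refine ((isCompact_sphere (0 : ℂ) 1).image hf).isBounded.subset ?_
  rintro y ⟨t, -, hy⟩
  refine ⟨Complex.exp (t * ω * Complex.I), ?_, ?_⟩
  · rw [mem_sphere_zero_iff_norm, ← Complex.ofReal_mul, Complex.norm_exp_ofReal_mul_I]
  · rw [exp_smul_eq_complexToMatrix ω hω] at hy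
    exact congrArg (WithLp.toLp 2) hy.symm

theorem stmt_16 (c τ : ℝ) (hc : c < 0) (hτ : 2 / Real.sqrt (-c) < τ) :
    (!![1 + τ ^ 2 * c / 2, τ * c * (1 + τ ^ 2 * c / 4); τ, 1 + τ ^ 2 * c / 2] :
        Matrix (Fin 2) (Fin 2) ℝ).trace < -2 ∧
    (∃ x : EuclideanSpace ℝ (Fin 2),
      ¬ IsBounded (discOrbit
        !![1 + τ ^ 2 * c / 2, τ * c * (1 + τ ^ 2 * c / 4); τ, 1 + τ ^ 2 * c / 2] x)) ∧
    (∀ x : EuclideanSpace ℝ (Fin 2), IsBounded (contOrbit !![0, c; 1, 0] x)) := by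
  have hω : 0 < √(-c) := Real.sqrt_pos.mpr (neg_pos.mpr hc)
  have hω_sq : √(-c) ^ 2 = -c := Real.sq_sqrt (neg_nonneg.mpr hc.le)
  have hτ₀ : 0 < τ := (div_pos two_pos hω).trans hτ
  have hτc : τ ^ 2 * c < -4 := by
    have := (div_lt_iff₀ hω).mp hτ
    nlinarith
  have hA : (!![0, c; 1, 0] : Matrix (Fin 2) (Fin 2) ℝ) = !![0, -√(-c) ^ 2; 1, 0] := by
    rw [hω_sq, neg_neg]
  refine ⟨?_, not_isBounded_discOrbit_stormerVerlet hτ₀ hτc,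
    fun x => hA ▸ isBounded_contOrbit _ hω.ne' x⟩
  change (stormerVerlet c τ).trace < -2
  rw [stormerVerlet_trace]
  linarith
end

section
/- Let A be a 2×2 real matrix with trace A = 0 and det A < 0, and let 0 < τ < 2/√(−det A). Then I − (τ/2)A is invertible, the matrix S(τ) = (I − (τ/2)A)⁻¹ (I + (τ/2)A) satisfies det S(τ) = 1 and trace S(τ) > 2, and the set {x ∈ ℝ² : {S(τ)ⁿ·x : n ∈ ℕ} is bounded} is a linear subspace of ℝ² of dimension 1, the same as the dimension of {x ∈ ℝ² : {exp(tA)·x : t ≥ 0} is bounded}. -/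
/-!
A traceless `2 × 2` real matrix with `det A = -μ² < 0` has eigenvalues `±μ`, with eigenvectors
`u` and `v`. The flow `exp (t A)` scales them by `e^{± t μ}`, and the implicit-midpoint step
`S = (1 - c A)⁻¹ (1 + c A)`, `c = τ / 2`, by `(1 ± c μ) / (1 ∓ c μ)`; for `0 < c μ < 1` the first
factor exceeds `1` and the second lies in `(0, 1)`. In both cases the vectors with bounded forward
orbit form a proper subspace containing `v`, hence the line `ℝ v`.
Cayley–Hamilton gives `A² = μ² • 1`, so `(1 - c A)(1 + c A) = (1 - c² μ²) • 1`; this inverts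
`1 - c A` and yields `det S = 1` and `trace S = 2 (1 + c² μ²) / (1 - c² μ²) > 2`.
-/

open Matrix Bornology

open Set Module

theorem Submodule.eq_span_singleton_of_finrank_eq_two {K V : Type*} [DivisionRing K]
    [AddCommGroup V] [Module K V] [FiniteDimensional K V] (hV : finrank K V = 2)
    {p : Submodule K V} (hp : p ≠ ⊤) {v : V} (hv : v ∈ p) (hv0 : v ≠ 0) :
    p = K ∙ v := by
  have hlt := Submodule.finrank_lt hp
  refine (Submodule.eq_of_le_of_finrank_le ((Submodule.span_singleton_le_iff_mem v p).2 hv) ?_).symm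
  rw [finrank_span_singleton hv0]
  omega

section BoundedOrbits

variable {ι E : Type*} [NormedAddCommGroup E] [NormedSpace ℝ E]

def boundedOrbits (T : ι → E →ₗ[ℝ] E) : Submodule ℝ E where
  carrier := {x | IsBounded (range fun i => T i x)}
  zero_mem' := isBounded_singleton.subset <| by
    rintro _ ⟨i, rfl⟩
    exact map_zero (T i)
  add_mem' {x y} hx hy := (hx.add hy).subset <| by
    rintro _ ⟨i, rfl⟩
    exact ⟨T i x, ⟨i, rfl⟩, T i y, ⟨i, rfl⟩, (map_add (T i) x y).symm⟩
  smul_mem' c x hx := (hx.smul₀ c).subset <| by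
    rintro _ ⟨i, rfl⟩
    exact ⟨T i x, ⟨i, rfl⟩, (map_smul (T i) c x).symm⟩

variable {T : ι → E →ₗ[ℝ] E}

theorem mem_boundedOrbits_of_forall_apply_eq_smul {v : E} {g : ι → ℝ}
    (hv : ∀ i, T i v = g i • v) (hg : BddAbove (range fun i => |g i|)) :
    v ∈ boundedOrbits T := by
  obtain ⟨C, hC⟩ := hg
  refine isBounded_iff_forall_norm_le.2 ⟨C * ‖v‖, forall_mem_range.2 fun i => ?_⟩
  rw [hv, norm_smul, Real.norm_eq_abs]
  exact mul_le_mul_of_nonneg_right (hC ⟨i, rfl⟩) (norm_nonneg v)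

theorem notMem_boundedOrbits_of_forall_apply_eq_smul {u : E} (hu0 : u ≠ 0) {f : ι → ℝ}
    (hu : ∀ i, T i u = f i • u) (hf : ¬BddAbove (range fun i => |f i|)) :
    u ∉ boundedOrbits T := by
  intro hmem
  obtain ⟨C, hC⟩ := isBounded_iff_forall_norm_le.1 hmem
  refine hf ⟨C / ‖u‖, forall_mem_range.2 fun i => ?_⟩
  rw [le_div_iff₀ (norm_pos_iff.2 hu0), ← Real.norm_eq_abs, ← norm_smul, ← hu]
  exact hC _ ⟨i, rfl⟩

theorem boundedOrbits_eq_span_singleton [FiniteDimensional ℝ E] (hE : finrank ℝ E = 2)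
    {u v : E} (hu0 : u ≠ 0) (hv0 : v ≠ 0) {f g : ι → ℝ}
    (hu : ∀ i, T i u = f i • u) (hv : ∀ i, T i v = g i • v)
    (hf : ¬BddAbove (range fun i => |f i|)) (hg : BddAbove (range fun i => |g i|)) :
    boundedOrbits T = ℝ ∙ v :=
  Submodule.eq_span_singleton_of_finrank_eq_two hE
    (ne_of_mem_of_not_mem' Submodule.mem_top
      (notMem_boundedOrbits_of_forall_apply_eq_smul hu0 hu hf)).symm
    (mem_boundedOrbits_of_forall_apply_eq_smul hv hg) hv0

end BoundedOrbits

namespace Matrix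

variable {n : Type*} [Fintype n] [DecidableEq n]

theorem pow_mulVec_of_mulVec_eq_smul_s19 {R : Type*} [CommSemiring R] {M : Matrix n n R} {r : R}
    {v : n → R} (h : M *ᵥ v = r • v) (k : ℕ) : (M ^ k) *ᵥ v = r ^ k • v := by
  induction k with
  | zero => simp
  | succ k ih => rw [pow_succ', ← mulVec_mulVec, ih, mulVec_smul, h, smul_smul, pow_succ]

-- Matrices carry no canonical norm; any submultiplicative one serves to sum the series.
open scoped Norms.Operator in
theorem exp_mulVec_of_mulVec_eq_smul {𝕂 : Type*} [RCLike 𝕂] {M : Matrix n n 𝕂} {r : 𝕂}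
    {v : n → 𝕂} (h : M *ᵥ v = r • v) : NormedSpace.exp M *ᵥ v = NormedSpace.exp r • v := by
  have hM := (NormedSpace.exp_series_hasSum_exp' (𝕂 := 𝕂) M).map ((mulVecBilin 𝕂 𝕂).flip v)
    ((mulVecBilin 𝕂 𝕂).flip v).continuous_of_finiteDimensional
  have hr := (NormedSpace.exp_series_hasSum_exp' (𝕂 := 𝕂) r).smul_const v
  refine hM.unique ?_
  simpa [Function.comp_def, mulVecBilin_apply, smul_mulVec, pow_mulVec_of_mulVec_eq_smul_s19 h,
    smul_smul] using hr

section Cayley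

variable {K : Type*} [Field K]

-- With `c = τ / 2` this is the implicit-midpoint step `S(τ)`.
noncomputable def cayley (c : K) (A : Matrix n n K) : Matrix n n K := (1 - c • A)⁻¹ * (1 + c • A)

theorem cayley_mulVec_of_mulVec_eq_smul {c r : K} {A : Matrix n n K} (hA : IsUnit (1 - c • A))
    {v : n → K} (hv : A *ᵥ v = r • v) : cayley c A *ᵥ v = ((1 + c * r) / (1 - c * r)) • v := by
  have hminus : (1 - c • A) *ᵥ v = (1 - c * r) • v := by
    rw [sub_mulVec, smul_mulVec, one_mulVec, hv, smul_smul, sub_smul, one_smul]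
  have hplus : (1 + c • A) *ᵥ v = (1 + c * r) • v := by
    rw [add_mulVec, smul_mulVec, one_mulVec, hv, smul_smul, add_smul, one_smul]
  have hinv : v = (1 - c * r) • (1 - c • A)⁻¹ *ᵥ v := by
    rw [← mulVec_smul, ← hminus, mulVec_mulVec,
      nonsing_inv_mul _ ((isUnit_iff_isUnit_det _).1 hA), one_mulVec]
  rcases eq_or_ne (1 - c * r) 0 with h0 | h0
  · rw [h0, zero_smul] at hinv
    simp [hinv]
  · rw [cayley, ← mulVec_mulVec, hplus, mulVec_smul, div_eq_mul_inv, mul_smul]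
    congr 1
    rw [eq_inv_smul_iff₀ h0]
    exact hinv.symm

end Cayley

section FinTwo

variable {K : Type*} [Field K] {A : Matrix (Fin 2) (Fin 2) K}

theorem mul_self_of_trace_eq_zero (hA : A.trace = 0) : A * A = -A.det • 1 := by
  have := aeval_self_charpoly A
  rw [charpoly_fin_two, hA] at this
  simpa [sq, Algebra.algebraMap_eq_smul_one, add_eq_zero_iff_eq_neg] using this

theorem det_one_add_smul_of_trace_eq_zero (hA : A.trace = 0) (c : K) :
    (1 + c • A).det = 1 + c ^ 2 * A.det := by
  have h : A 0 0 + A 1 1 = 0 := by rw [← trace_fin_two]; exact hA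
  simp only [det_fin_two, add_apply, smul_apply, one_apply, smul_eq_mul]
  norm_num
  linear_combination c * h

theorem det_one_sub_smul_of_trace_eq_zero (hA : A.trace = 0) (c : K) :
    (1 - c • A).det = 1 + c ^ 2 * A.det := by
  rw [sub_eq_add_neg, ← neg_smul, det_one_add_smul_of_trace_eq_zero hA, neg_sq]

theorem isUnit_one_sub_smul_of_trace_eq_zero (hA : A.trace = 0) {c : K}
    (hd : 1 + c ^ 2 * A.det ≠ 0) : IsUnit (1 - c • A) := by
  rw [isUnit_iff_isUnit_det, det_one_sub_smul_of_trace_eq_zero hA]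
  exact hd.isUnit

theorem one_sub_smul_mul_one_add_smul_of_trace_eq_zero (hA : A.trace = 0) (c : K) :
    (1 - c • A) * (1 + c • A) = (1 + c ^ 2 * A.det) • 1 := by
  rw [sub_mul, mul_add, mul_add, smul_mul_smul_comm, mul_self_of_trace_eq_zero hA]
  simp only [one_mul, mul_one]
  module

theorem cayley_eq_of_trace_eq_zero (hA : A.trace = 0) {c : K} (hd : 1 + c ^ 2 * A.det ≠ 0) :
    cayley c A = (1 + c ^ 2 * A.det)⁻¹ • ((1 - c ^ 2 * A.det) • 1 + (2 * c) • A) := by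
  have hinv : (1 - c • A)⁻¹ = (1 + c ^ 2 * A.det)⁻¹ • (1 + c • A) := by
    refine inv_eq_right_inv ?_
    rw [mul_smul_comm, one_sub_smul_mul_one_add_smul_of_trace_eq_zero hA, smul_smul,
      inv_mul_cancel₀ hd, one_smul]
  rw [cayley, hinv, smul_mul_assoc]
  congr 1
  rw [mul_add, add_mul, add_mul, smul_mul_smul_comm, mul_self_of_trace_eq_zero hA]
  simp only [one_mul, mul_one]
  module

theorem det_cayley_of_trace_eq_zero (hA : A.trace = 0) {c : K} (hd : 1 + c ^ 2 * A.det ≠ 0) :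
    (cayley c A).det = 1 := by
  rw [cayley, det_mul, det_nonsing_inv, det_one_sub_smul_of_trace_eq_zero hA,
    det_one_add_smul_of_trace_eq_zero hA, Ring.inverse_eq_inv', inv_mul_cancel₀ hd]

theorem trace_cayley_of_trace_eq_zero (hA : A.trace = 0) {c : K} (hd : 1 + c ^ 2 * A.det ≠ 0) :
    (cayley c A).trace = 2 * (1 - c ^ 2 * A.det) / (1 + c ^ 2 * A.det) := by
  rw [cayley_eq_of_trace_eq_zero hA hd, trace_smul, trace_add, trace_smul, trace_smul, hA,
    trace_one, Fintype.card_fin]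
  simp only [smul_eq_mul]
  field_simp
  ring

theorem exists_mulVec_eq_smul_of_trace_eq_zero (hA : A.trace = 0) {r : K}
    (hr : r ^ 2 = -A.det) : ∃ v ≠ 0, A *ᵥ v = r • v := by
  have h : A 0 0 + A 1 1 = 0 := by rw [← trace_fin_two]; exact hA
  have hdet : (A - r • 1).det = 0 := by
    rw [det_fin_two] at hr
    simp only [det_fin_two, sub_apply, smul_apply, one_apply, smul_eq_mul]
    norm_num
    linear_combination (-r) * h + hr
  obtain ⟨v, hv0, hv⟩ := exists_mulVec_eq_zero_iff.2 hdet
  refine ⟨v, hv0, ?_⟩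
  rwa [sub_mulVec, smul_mulVec, one_mulVec, sub_eq_zero] at hv

theorem two_lt_trace_cayley {A : Matrix (Fin 2) (Fin 2) ℝ} (hA : A.trace = 0) (hdet : A.det < 0)
    {c : ℝ} (hc : c ≠ 0) (hd : 0 < 1 + c ^ 2 * A.det) : 2 < (cayley c A).trace := by
  rw [trace_cayley_of_trace_eq_zero hA hd.ne', lt_div_iff₀ hd]
  nlinarith [pow_pos (abs_pos.2 hc) 2, sq_abs c]

end FinTwo

end Matrix

section Orbits

open WithLp

theorem discOrbit_eq_range (S : Matrix (Fin 2) (Fin 2) ℝ) (x : EuclideanSpace ℝ (Fin 2)) :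
    discOrbit S x = range fun k : ℕ => toEuclideanLin (S ^ k) x := by
  ext y
  simp only [discOrbit, mem_ofPred_eq, mem_range, toLpLin_apply]
  exact exists_congr fun k => by rw [eq_comm, WithLp.ext_iff, ofLp_toLp]

theorem contOrbit_eq_range (A : Matrix (Fin 2) (Fin 2) ℝ) (x : EuclideanSpace ℝ (Fin 2)) :
    contOrbit A x =
      range fun t : Ici (0 : ℝ) => toEuclideanLin (NormedSpace.exp ((t : ℝ) • A)) x := by
  ext y
  simp only [contOrbit, mem_ofPred_eq, mem_range, toLpLin_apply, Subtype.exists]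
  exact exists_congr fun t => by rw [mem_Ici, exists_prop, eq_comm, WithLp.ext_iff, ofLp_toLp]

theorem coe_boundedOrbits_pow (S : Matrix (Fin 2) (Fin 2) ℝ) :
    (boundedOrbits fun k : ℕ => toEuclideanLin (S ^ k) : Set (EuclideanSpace ℝ (Fin 2))) =
      {x | IsBounded (discOrbit S x)} :=
  Set.ext fun x => by rw [mem_ofPred_eq, discOrbit_eq_range]; rfl

theorem coe_boundedOrbits_exp (A : Matrix (Fin 2) (Fin 2) ℝ) :
    (boundedOrbits fun t : Ici (0 : ℝ) => toEuclideanLin (NormedSpace.exp ((t : ℝ) • A)) :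
      Set (EuclideanSpace ℝ (Fin 2))) = {x | IsBounded (contOrbit A x)} :=
  Set.ext fun x => by rw [mem_ofPred_eq, contOrbit_eq_range]; rfl

theorem boundedOrbits_pow_eq_span {S : Matrix (Fin 2) (Fin 2) ℝ} {σ σ' : ℝ} {u v : Fin 2 → ℝ}
    (hu0 : u ≠ 0) (hv0 : v ≠ 0) (hu : S *ᵥ u = σ • u) (hv : S *ᵥ v = σ' • v) (hσ : 1 < σ)
    (hσ' : |σ'| ≤ 1) :
    boundedOrbits (fun k : ℕ => toEuclideanLin (S ^ k)) = ℝ ∙ toLp 2 v := by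
  refine boundedOrbits_eq_span_singleton finrank_euclideanSpace_fin
    (u := toLp 2 u) (by simpa using hu0) (by simpa using hv0) (f := (σ ^ ·)) (g := (σ' ^ ·))
    (fun k => by rw [toLpLin_apply, ofLp_toLp, pow_mulVec_of_mulVec_eq_smul_s19 hu, toLp_smul])
    (fun k => by rw [toLpLin_apply, ofLp_toLp, pow_mulVec_of_mulVec_eq_smul_s19 hv, toLp_smul]) ?_ ?_
  · rintro ⟨C, hC⟩
    obtain ⟨k, hk⟩ := pow_unbounded_of_one_lt C hσ
    exact (hk.trans_le ((le_abs_self _).trans (hC ⟨k, rfl⟩))).false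
  · exact ⟨1, forall_mem_range.2 fun k => by rw [abs_pow]; exact pow_le_one₀ (abs_nonneg _) hσ'⟩

theorem boundedOrbits_exp_eq_span {A : Matrix (Fin 2) (Fin 2) ℝ} {r₁ r₂ : ℝ} {u v : Fin 2 → ℝ}
    (hu0 : u ≠ 0) (hv0 : v ≠ 0) (hu : A *ᵥ u = r₁ • u) (hv : A *ᵥ v = r₂ • v) (hr₁ : 0 < r₁)
    (hr₂ : r₂ ≤ 0) :
    boundedOrbits (fun t : Ici (0 : ℝ) => toEuclideanLin (NormedSpace.exp ((t : ℝ) • A))) =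
      ℝ ∙ toLp 2 v := by
  have hexp {r : ℝ} {w : Fin 2 → ℝ} (hw : A *ᵥ w = r • w) (t : ℝ) :
      NormedSpace.exp (t • A) *ᵥ w = Real.exp (t * r) • w := by
    rw [Real.exp_eq_exp_ℝ]
    exact exp_mulVec_of_mulVec_eq_smul (by rw [smul_mulVec, hw, smul_smul])
  refine boundedOrbits_eq_span_singleton finrank_euclideanSpace_fin
    (u := toLp 2 u) (by simpa using hu0) (by simpa using hv0)
    (f := fun t => Real.exp (t * r₁)) (g := fun t => Real.exp (t * r₂))
    (fun t => by rw [toLpLin_apply, ofLp_toLp, hexp hu, toLp_smul])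
    (fun t => by rw [toLpLin_apply, ofLp_toLp, hexp hv, toLp_smul]) ?_ ?_
  · rintro ⟨C, hC⟩
    have h := hC ⟨⟨|C| / r₁, div_nonneg (abs_nonneg C) hr₁.le⟩, rfl⟩
    simp only [Real.abs_exp, div_mul_cancel₀ _ hr₁.ne'] at h
    linarith [Real.add_one_le_exp |C|, le_abs_self C]
  · refine ⟨1, forall_mem_range.2 fun t => ?_⟩
    rw [Real.abs_exp, Real.exp_le_one_iff]
    exact mul_nonpos_of_nonneg_of_nonpos t.2 hr₂

end Orbits

theorem stmt_19 (A : Matrix (Fin 2) (Fin 2) ℝ) (hTr : A.trace = 0) (hDet : A.det < 0)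
    (τ : ℝ) (hτ0 : 0 < τ) (hτ : τ < 2 / Real.sqrt (-A.det)) :
    IsUnit (1 - (τ / 2) • A) ∧
    ((1 - (τ / 2) • A)⁻¹ * (1 + (τ / 2) • A)).det = 1 ∧
    (2 : ℝ) < ((1 - (τ / 2) • A)⁻¹ * (1 + (τ / 2) • A)).trace ∧
    ∃ BS BA : Submodule ℝ (EuclideanSpace ℝ (Fin 2)),
      (↑BS = {x : EuclideanSpace ℝ (Fin 2) |
        IsBounded (discOrbit ((1 - (τ / 2) • A)⁻¹ * (1 + (τ / 2) • A)) x)}) ∧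
      Module.finrank ℝ BS = 1 ∧
      (↑BA = {x : EuclideanSpace ℝ (Fin 2) | IsBounded (contOrbit A x)}) ∧
      Module.finrank ℝ BA = Module.finrank ℝ BS := by
  set c := τ / 2 with hc
  obtain ⟨μ, hμ, hμsq, hcμ⟩ : ∃ μ : ℝ, 0 < μ ∧ μ ^ 2 = -A.det ∧ c * μ < 1 := by
    have hμ : 0 < √(-A.det) := Real.sqrt_pos.2 (neg_pos.2 hDet)
    refine ⟨_, hμ, Real.sq_sqrt (neg_nonneg.2 hDet.le), ?_⟩
    rw [lt_div_iff₀ hμ] at hτ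
    rw [hc]
    linarith
  have hcμ₀ : 0 < c * μ := by positivity
  have hd : 0 < 1 + c ^ 2 * A.det := by nlinarith
  have hU := isUnit_one_sub_smul_of_trace_eq_zero hTr hd.ne'
  refine ⟨hU, det_cayley_of_trace_eq_zero hTr hd.ne',
    two_lt_trace_cayley hTr hDet (by positivity) hd, ?_⟩
  obtain ⟨u, hu0, hu⟩ := exists_mulVec_eq_smul_of_trace_eq_zero hTr hμsq
  obtain ⟨v, hv0, hv⟩ :=
    exists_mulVec_eq_smul_of_trace_eq_zero hTr (r := -μ) (by rw [neg_sq, hμsq])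
  have hσ : 1 < (1 + c * μ) / (1 - c * μ) := by rw [one_lt_div (by linarith)]; linarith
  have hσ' : |(1 + c * -μ) / (1 - c * -μ)| ≤ 1 := by
    rw [abs_le, le_div_iff₀ (by linarith), div_le_one (by linarith)]
    constructor <;> linarith
  have hBS := boundedOrbits_pow_eq_span hu0 hv0 (cayley_mulVec_of_mulVec_eq_smul hU hu)
    (cayley_mulVec_of_mulVec_eq_smul hU hv) hσ hσ'
  have hBA := boundedOrbits_exp_eq_span hu0 hv0 hu hv hμ (by linarith)
  refine ⟨_, _, coe_boundedOrbits_pow (cayley c A), ?_, coe_boundedOrbits_exp A,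
    by rw [hBS, hBA]⟩
  rw [hBS, finrank_span_singleton (by simpa using hv0)]
end
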